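/- For every Lindblad generator ℒ on M₂(ℂ), the kernel of ℒ, viewed as a ℂ-linear subspace of M₂(ℂ), does not have complex dimension exactly 3. Equivalently, if a single-qubit Lindblad generator annihilates three linearly independent matrices, then it is identically zero. -/

import Mathlib

open Matrix Complex

noncomputable section

/-- Pauli matrices. -/
def σx : Matrix (Fin 2) (Fin 2) ℂ := !![0, 1; 1, 0]
def σy : Matrix (Fin 2) (Fin 2) ℂ := !![0, -Complex.I; Complex.I, 0]
def σz : Matrix (Fin 2) (Fin 2) ℂ := !![1, 0; 0, -1]

/-- Operators on `r` qubits: the `r`-fold tensor power of `M₂(ℂ)`. -/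
abbrev QOp (r : ℕ) := Matrix (Fin r → Fin 2) (Fin r → Fin 2) ℂ

/-- Operators on a ring of `n` qubits. -/
abbrev ROp (n : ℕ) := Matrix (ZMod n → Fin 2) (ZMod n → Fin 2) ℂ

/-- The Lindblad dissipator `D_L(ρ) = [Lρ, L†] + [L, ρL†]`. -/
def dissipator {I : Type*} [Fintype I] (L ρ : Matrix I I ℂ) : Matrix I I ℂ :=
  (L * ρ * Lᴴ - Lᴴ * (L * ρ)) + (L * (ρ * Lᴴ) - ρ * Lᴴ * L)

/-- `𝓛` is a Lindblad generator: `𝓛(ρ) = i(ρH − Hρ) + Σ_k D_{L_k}(ρ)` for a Hermitian `H`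
and a finite family of Lindblad operators. -/
def IsLindblad {I : Type*} [Fintype I] (𝓛 : Matrix I I ℂ → Matrix I I ℂ) : Prop :=
  ∃ H : Matrix I I ℂ, H.IsHermitian ∧ ∃ (m : ℕ) (Ls : Fin m → Matrix I I ℂ),
    ∀ ρ, 𝓛 ρ = Complex.I • (ρ * H - H * ρ) + ∑ k, dissipator (Ls k) ρ

/-- Tensor (Kronecker) product of two single-qubit operators, as a two-qubit operator. -/
def kron2 (A B : Matrix (Fin 2) (Fin 2) ℂ) : QOp 2 :=
  Matrix.of fun x y => A (x 0) (y 0) * B (x 1) (y 1)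

/-- Tensor product of `m` single-qubit operators. -/
def kronPow {m : ℕ} (f : Fin m → Matrix (Fin 2) (Fin 2) ℂ) : QOp m :=
  Matrix.of fun x y => ∏ i, f i (x i) (y i)

variable {n : ℕ}

/-- `b` acting on the `r` consecutive sites `j, j+1, …, j+r−1` (mod `n`) of the ring,
and as identity on all other sites. -/
def embWin [NeZero n] (r : ℕ) (j : ZMod n) (b : QOp r) : ROp n :=
  Matrix.of fun x y =>
    (∏ s : ZMod n, if ∃ i : Fin r, s = j + (i.val : ZMod n) then (1 : ℂ)
      else if x s = y s then 1 else 0) *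
    b (fun i => x (j + (i.val : ZMod n))) (fun i => y (j + (i.val : ZMod n)))

/-- Replace the values of a ring configuration on the window `j,…,j+r−1` by `u`. -/
def patch (r : ℕ) (j : ZMod n) (x : ZMod n → Fin 2) (u : Fin r → Fin 2) : ZMod n → Fin 2 :=
  fun s => if h : ∃ i : Fin r, s = j + (i.val : ZMod n) then u h.choose else x s

/-- The (linear) map `𝓛` on `r`-site operators, acting as `𝓛` on the tensor factors of the
sites `j,…,j+r−1` of the ring and as the identity map on all other tensor factors. -/
def embMap [NeZero n] (r : ℕ) (j : ZMod n) (𝓛 : QOp r → QOp r) (M : ROp n) : ROp n :=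
  Matrix.of fun x y =>
    (∏ s : ZMod n, if ∃ i : Fin r, s = j + (i.val : ZMod n) then (1 : ℂ)
      else if x s = y s then 1 else 0) *
    𝓛 (Matrix.of fun u u' => M (patch r j x u) (patch r j y u'))
      (fun i => x (j + (i.val : ZMod n))) (fun i => y (j + (i.val : ZMod n)))

/-- A single-qubit operator `b` acting on site `k` of the ring, identity elsewhere. -/
def embSite [NeZero n] (k : ZMod n) (b : Matrix (Fin 2) (Fin 2) ℂ) : ROp n :=
  Matrix.of fun x y =>
    (∏ s : ZMod n, if s = k then (1 : ℂ) else if x s = y s then 1 else 0) * b (x k) (y k)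

/-- A (linear) map `𝓛` on single-qubit operators acting on site `j` of the ring,
identity map on all other tensor factors. -/
def embMapSite [NeZero n] (j : ZMod n)
    (𝓛 : Matrix (Fin 2) (Fin 2) ℂ → Matrix (Fin 2) (Fin 2) ℂ) (M : ROp n) : ROp n :=
  Matrix.of fun x y =>
    (∏ s : ZMod n, if s = j then (1 : ℂ) else if x s = y s then 1 else 0) *
    𝓛 (Matrix.of fun u u' => M (Function.update x j u) (Function.update y j u')) (x j) (y j)

/-!
By rank–nullity on the 4-dimensional space `M₂(ℂ)`, both claims reduce to showing that a
single-qubit Lindblad generator `𝓛` of rank at most one vanishes. As `𝓛` commutes with taking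
adjoints, its range is then spanned by a Hermitian matrix `T`; conjugating by a unitary that
diagonalises `T` keeps `𝓛` in Lindblad form and makes every `𝓛 ρ` diagonal and
traceless.

For orthogonal `χ, ψ` the Hamiltonian part drops out of `⟨ψ, 𝓛(χχ†) ψ⟩`, which equals
`2 ∑ₖ |⟨ψ, Lₖ χ⟩|²`. With `ψ = (1, ω)`, `χ = (1, -ω)` and `|ω| = 1` the left side is the trace of
`𝓛(χχ†)`, hence zero, and the resulting equations for `ω = 1, -1, i` force every `Lₖ` to be
scalar. So `𝓛 = i[·, H]`, and diagonality of `i[E₀₀, H]` and `i[E₀₁, H]` makes `H` scalar too.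
-/

open ComplexConjugate

section Lindbladian

variable {ι : Type*} [Fintype ι] {m : ℕ}

def lindbladian (H : Matrix ι ι ℂ) (Ls : Fin m → Matrix ι ι ℂ) (ρ : Matrix ι ι ℂ) :
    Matrix ι ι ℂ :=
  Complex.I • (ρ * H - H * ρ) + ∑ k, dissipator (Ls k) ρ

theorem isLindblad_iff {𝓛 : Matrix ι ι ℂ → Matrix ι ι ℂ} :
    IsLindblad 𝓛 ↔ ∃ H : Matrix ι ι ℂ, H.IsHermitian ∧
      ∃ (m : ℕ) (Ls : Fin m → Matrix ι ι ℂ), 𝓛 = lindbladian H Ls := by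
  simp only [IsLindblad, funext_iff, lindbladian]

theorem dissipator_conjTranspose (L ρ : Matrix ι ι ℂ) :
    dissipator L ρᴴ = (dissipator L ρ)ᴴ := by
  simp only [dissipator, conjTranspose_add, conjTranspose_sub, conjTranspose_mul,
    conjTranspose_conjTranspose, mul_assoc]
  abel

theorem trace_dissipator (L ρ : Matrix ι ι ℂ) : (dissipator L ρ).trace = 0 := by
  rw [dissipator, trace_add, trace_sub, trace_sub, trace_mul_comm (L * ρ), trace_mul_comm L,
    ← mul_assoc, mul_assoc ρ, trace_mul_comm ρ, mul_assoc]
  ring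

theorem dissipator_smul_one [DecidableEq ι] (a : ℂ) (ρ : Matrix ι ι ℂ) :
    dissipator (a • 1) ρ = 0 := by
  simp only [dissipator, conjTranspose_smul, conjTranspose_one, smul_mul, one_mul]
  simp [smul_smul, mul_comm]

theorem dissipator_unitary_conj [DecidableEq ι] {U : Matrix ι ι ℂ} (hU : U ∈ unitary _)
    (L ρ : Matrix ι ι ℂ) :
    star U * dissipator L (U * ρ * star U) * U = dissipator (star U * L * U) ρ := by
  have h1 (X : Matrix ι ι ℂ) : star U * (U * X) = X := by
    rw [← mul_assoc, Unitary.star_mul_self_of_mem hU, one_mul]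
  have h2 (X : Matrix ι ι ℂ) : U * (star U * X) = X := by
    rw [← mul_assoc, Unitary.mul_star_self_of_mem hU, one_mul]
  simp only [dissipator, ← star_eq_conjTranspose, star_mul, star_star,
    Matrix.mul_add, Matrix.add_mul, Matrix.mul_sub, Matrix.sub_mul, mul_assoc, h1, h2,
    Unitary.star_mul_self_of_mem hU, mul_one]

theorem dotProduct_dissipator_vecMulVec_mulVec (L : Matrix ι ι ℂ) {χ ψ : ι → ℂ}
    (hχψ : star ψ ⬝ᵥ χ = 0) :
    star ψ ⬝ᵥ (dissipator L (vecMulVec χ (star χ)) *ᵥ ψ) =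
      2 * normSq (star ψ ⬝ᵥ (L *ᵥ χ)) := by
  have hψχ : star χ ⬝ᵥ ψ = 0 := by rw [star_dotProduct, hχψ, star_zero]
  have hadj : star χ ⬝ᵥ (Lᴴ *ᵥ ψ) = star (star ψ ⬝ᵥ (L *ᵥ χ)) := by
    rw [star_dotProduct, star_mulVec, conjTranspose_conjTranspose, ← dotProduct_mulVec]
  simp only [dissipator, add_mulVec, sub_mulVec, dotProduct_add, dotProduct_sub,
    ← mulVec_mulVec, vecMulVec_mulVec, op_smul_eq_smul, mulVec_smul, dotProduct_smul, hχψ, hψχ,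
    hadj, smul_eq_mul, mul_zero, zero_mul, sub_zero, star_def]
  rw [← mul_conj]
  ring

theorem dotProduct_commutator_vecMulVec_mulVec (H : Matrix ι ι ℂ) {χ ψ : ι → ℂ}
    (hχψ : star ψ ⬝ᵥ χ = 0) :
    star ψ ⬝ᵥ ((vecMulVec χ (star χ) * H - H * vecMulVec χ (star χ)) *ᵥ ψ) = 0 := by
  have hψχ : star χ ⬝ᵥ ψ = 0 := by rw [star_dotProduct, hχψ, star_zero]
  simp only [sub_mulVec, dotProduct_sub, ← mulVec_mulVec, vecMulVec_mulVec, op_smul_eq_smul,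
    mulVec_smul, dotProduct_smul, hχψ, hψχ, smul_eq_mul, mul_zero, zero_mul, sub_zero]

theorem lindbladian_conjTranspose {H : Matrix ι ι ℂ} (hH : H.IsHermitian)
    (Ls : Fin m → Matrix ι ι ℂ) (ρ : Matrix ι ι ℂ) :
    lindbladian H Ls ρᴴ = (lindbladian H Ls ρ)ᴴ := by
  simp only [lindbladian, conjTranspose_add, conjTranspose_smul, conjTranspose_sub,
    conjTranspose_mul, conjTranspose_sum, hH.eq, dissipator_conjTranspose, star_def, conj_I,
    neg_smul, smul_sub]
  abel

theorem trace_lindbladian (H : Matrix ι ι ℂ) (Ls : Fin m → Matrix ι ι ℂ) (ρ : Matrix ι ι ℂ) :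
    (lindbladian H Ls ρ).trace = 0 := by
  simp [lindbladian, trace_sum, trace_dissipator, trace_mul_comm ρ H]

theorem lindbladian_unitary_conj [DecidableEq ι] {U : Matrix ι ι ℂ} (hU : U ∈ unitary _)
    (H : Matrix ι ι ℂ) (Ls : Fin m → Matrix ι ι ℂ) (ρ : Matrix ι ι ℂ) :
    star U * lindbladian H Ls (U * ρ * star U) * U =
      lindbladian (star U * H * U) (fun k => star U * Ls k * U) ρ := by
  have h1 (X : Matrix ι ι ℂ) : star U * (U * X) = X := by
    rw [← mul_assoc, Unitary.star_mul_self_of_mem hU, one_mul]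
  rw [lindbladian, lindbladian, Matrix.mul_add, Matrix.add_mul, Finset.mul_sum, Finset.sum_mul]
  simp only [dissipator_unitary_conj hU]
  simp only [Matrix.mul_smul, Matrix.smul_mul, Matrix.mul_sub,
    Matrix.sub_mul, mul_assoc, h1, Unitary.star_mul_self_of_mem hU, mul_one]

theorem dotProduct_lindbladian_vecMulVec_mulVec (H : Matrix ι ι ℂ) (Ls : Fin m → Matrix ι ι ℂ)
    {χ ψ : ι → ℂ} (hχψ : star ψ ⬝ᵥ χ = 0) :
    star ψ ⬝ᵥ (lindbladian H Ls (vecMulVec χ (star χ)) *ᵥ ψ) =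
      ∑ k, 2 * (normSq (star ψ ⬝ᵥ (Ls k *ᵥ χ)) : ℂ) := by
  rw [lindbladian, add_mulVec, dotProduct_add, smul_mulVec, dotProduct_smul,
    dotProduct_commutator_vecMulVec_mulVec H hχψ, smul_zero, zero_add, sum_mulVec, dotProduct_sum]
  exact Finset.sum_congr rfl fun k _ => dotProduct_dissipator_vecMulVec_mulVec (Ls k) hχψ

theorem dotProduct_mulVec_eq_zero_of_lindbladian {H : Matrix ι ι ℂ} {Ls : Fin m → Matrix ι ι ℂ}
    {χ ψ : ι → ℂ} (hχψ : star ψ ⬝ᵥ χ = 0)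
    (h : star ψ ⬝ᵥ (lindbladian H Ls (vecMulVec χ (star χ)) *ᵥ ψ) = 0) (k : Fin m) :
    star ψ ⬝ᵥ (Ls k *ᵥ χ) = 0 := by
  rw [dotProduct_lindbladian_vecMulVec_mulVec H Ls hχψ] at h
  have hsum : ∑ k, 2 * normSq (star ψ ⬝ᵥ (Ls k *ᵥ χ)) = 0 := by exact_mod_cast h
  have hnonneg (k : Fin m) : 0 ≤ 2 * normSq (star ψ ⬝ᵥ (Ls k *ᵥ χ)) :=
    mul_nonneg zero_le_two (normSq_nonneg _)
  simpa using (Finset.sum_eq_zero_iff_of_nonneg fun k _ => hnonneg k).1 hsum k (Finset.mem_univ k)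

theorem exists_isHermitian_forall_eq_smul {f : Matrix ι ι ℂ →ₗ[ℂ] Matrix ι ι ℂ}
    (hf : ∀ ρ, f ρᴴ = (f ρ)ᴴ)
    (hrk : Module.finrank ℂ (LinearMap.range f) ≤ 1) :
    ∃ T : Matrix ι ι ℂ, T.IsHermitian ∧ ∀ ρ, ∃ c : ℂ, f ρ = c • T := by
  obtain ⟨⟨_, σ, rfl⟩, hσ⟩ := finrank_le_one_iff.1 hrk
  have hmul (ρ) : ∃ c : ℂ, f ρ = c • f σ := by
    obtain ⟨c, hc⟩ := hσ ⟨f ρ, ρ, rfl⟩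
    exact ⟨c, congrArg Subtype.val hc.symm⟩
  by_cases hanti : f σ + (f σ)ᴴ = 0
  · refine ⟨I • f σ, ?_, fun ρ => ?_⟩
    · rw [IsHermitian, conjTranspose_smul, eq_neg_of_add_eq_zero_right hanti, star_def, conj_I,
        smul_neg, neg_smul, neg_neg]
    · obtain ⟨c, hc⟩ := hmul ρ
      refine ⟨-I * c, ?_⟩
      rw [hc, smul_smul]
      congr 1
      linear_combination c * I_sq
  · obtain ⟨a, ha⟩ := hmul σᴴ
    rw [hf] at ha
    have ha1 : 1 + a ≠ 0 := fun h => hanti <| by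
      rw [ha, show a = -1 by linear_combination h, neg_one_smul, add_neg_cancel]
    refine ⟨f σ + (f σ)ᴴ, ?_, fun ρ => ?_⟩
    · rw [IsHermitian, conjTranspose_add, conjTranspose_conjTranspose, add_comm]
    · obtain ⟨c, hc⟩ := hmul ρ
      refine ⟨c / (1 + a), ?_⟩
      rw [hc, ha, smul_add, smul_smul, ← add_smul]
      congr 1
      field_simp

end Lindbladian

section Qubit

variable {m : ℕ}

theorem eq_smul_one_of_fin_two {A : Matrix (Fin 2) (Fin 2) ℂ} (h₀₁ : A 0 1 = 0) (h₁₀ : A 1 0 = 0)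
    (h₁₁ : A 1 1 = A 0 0) : A = A 0 0 • 1 := by
  ext i j
  fin_cases i <;> fin_cases j <;> simp [h₀₁, h₁₀, h₁₁]

theorem star_dotProduct_mulVec_fin_two (M : Matrix (Fin 2) (Fin 2) ℂ) (a b c d : ℂ) :
    star ![a, b] ⬝ᵥ (M *ᵥ ![c, d]) =
      conj a * (M 0 0 * c + M 0 1 * d) + conj b * (M 1 0 * c + M 1 1 * d) := by
  simp [dotProduct, mulVec, Fin.sum_univ_two]

theorem eq_smul_one_of_forall_dotProduct_mulVec_eq_zero {L : Matrix (Fin 2) (Fin 2) ℂ}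
    (h : ∀ ω : ℂ, normSq ω = 1 → star ![1, ω] ⬝ᵥ (L *ᵥ ![1, -ω]) = 0) : L = L 0 0 • 1 := by
  have h₁ := h 1 (by simp)
  have h₂ := h (-1) (by simp)
  have h₃ := h I (by simp)
  simp only [star_dotProduct_mulVec_fin_two, map_one, map_neg, conj_I, neg_neg] at h₁ h₂ h₃
  apply eq_smul_one_of_fin_two
  · linear_combination (I * (h₃ - (h₁ + h₂) / 2) + (h₂ - h₁) / 2) / 2
      + (L 0 1 + L 1 0 - I * L 1 1) / 2 * I_sq
  · linear_combination (I * (h₃ - (h₁ + h₂) / 2) - (h₂ - h₁) / 2) / 2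
      + (L 0 1 + L 1 0 - I * L 1 1) / 2 * I_sq
  · linear_combination -(h₁ + h₂) / 2

theorem eq_smul_one_of_forall_isDiag_lindbladian {H : Matrix (Fin 2) (Fin 2) ℂ}
    {Ls : Fin m → Matrix (Fin 2) (Fin 2) ℂ} (hdiag : ∀ ρ, (lindbladian H Ls ρ).IsDiag)
    (k : Fin m) : Ls k = Ls k 0 0 • 1 := by
  refine eq_smul_one_of_forall_dotProduct_mulVec_eq_zero fun ω hω => ?_
  have hω' : conj ω * ω = 1 := by rw [mul_comm, mul_conj, hω, ofReal_one]
  refine dotProduct_mulVec_eq_zero_of_lindbladian (H := H) ?_ ?_ k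
  · simp [dotProduct, Fin.sum_univ_two, hω']
  · set ρ := lindbladian H Ls (vecMulVec ![1, -ω] (star ![1, -ω]))
    have h₀₁ : ρ 0 1 = 0 := hdiag _ (by decide)
    have h₁₀ : ρ 1 0 = 0 := hdiag _ (by decide)
    have htr : ρ.trace = 0 := trace_lindbladian H Ls _
    rw [trace_fin_two] at htr
    rw [star_dotProduct_mulVec_fin_two, h₀₁, h₁₀, map_one]
    linear_combination htr + ρ 1 1 * hω'

theorem lindbladian_eq_zero_of_forall_isDiag {H : Matrix (Fin 2) (Fin 2) ℂ}
    {Ls : Fin m → Matrix (Fin 2) (Fin 2) ℂ} (hdiag : ∀ ρ, (lindbladian H Ls ρ).IsDiag) :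
    lindbladian H Ls = 0 := by
  have hH (ρ) : lindbladian H Ls ρ = I • (ρ * H - H * ρ) := by
    rw [lindbladian, Finset.sum_eq_zero fun k _ => by
      rw [eq_smul_one_of_forall_isDiag_lindbladian hdiag k, dissipator_smul_one], add_zero]
  have h₀₁ : H 0 1 = 0 := by
    simpa [hH, mul_apply, vecMul, dotProduct, Fin.sum_univ_two] using hdiag !![1, 0; 0, 0]
      (by decide : (0 : Fin 2) ≠ 1)
  have h₁₀ : H 1 0 = 0 := by
    simpa [hH, mul_apply, vecMul, dotProduct, Fin.sum_univ_two] using hdiag !![1, 0; 0, 0]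
      (by decide : (1 : Fin 2) ≠ 0)
  have h₁₁ : H 1 1 - H 0 0 = 0 := by
    simpa [hH, mul_apply, vecMul, dotProduct, Fin.sum_univ_two] using hdiag !![0, 1; 0, 0]
      (by decide : (0 : Fin 2) ≠ 1)
  have hHs : H = H 0 0 • 1 := eq_smul_one_of_fin_two h₀₁ h₁₀ (sub_eq_zero.1 h₁₁)
  funext ρ
  rw [hH, hHs]
  simp

theorem lindbladian_eq_zero_of_forall_eq_smul {H T : Matrix (Fin 2) (Fin 2) ℂ}
    {Ls : Fin m → Matrix (Fin 2) (Fin 2) ℂ} (hT : T.IsHermitian)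
    (h : ∀ ρ, ∃ c : ℂ, lindbladian H Ls ρ = c • T) : lindbladian H Ls = 0 := by
  set U : Matrix (Fin 2) (Fin 2) ℂ := (hT.eigenvectorUnitary : Matrix (Fin 2) (Fin 2) ℂ)
  have hU : U ∈ unitary _ := hT.eigenvectorUnitary.2
  have hTdiag : star U * T * U = diagonal (RCLike.ofReal ∘ hT.eigenvalues) := by
    simpa using hT.conjStarAlgAut_star_eigenvectorUnitary
  have hzero : lindbladian (star U * H * U) (fun k => star U * Ls k * U) = 0 :=
    lindbladian_eq_zero_of_forall_isDiag fun ρ => by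
      obtain ⟨c, hc⟩ := h (U * ρ * star U)
      rw [← lindbladian_unitary_conj hU, hc, Matrix.mul_smul, Matrix.smul_mul, hTdiag]
      exact (isDiag_diagonal _).smul c
  have hconj (X : Matrix (Fin 2) (Fin 2) ℂ) : U * (star U * X * U) * star U = X := by
    rw [← mul_assoc, ← mul_assoc, Unitary.mul_star_self_of_mem hU, one_mul, mul_assoc,
      Unitary.mul_star_self_of_mem hU, mul_one]
  funext ρ
  have hρ := congrArg (fun X => U * X * star U) (congrFun hzero (star U * ρ * U))
  simpa only [← lindbladian_unitary_conj hU, hconj, Pi.zero_apply, mul_zero, zero_mul] using hρ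

theorem eq_zero_of_isLindblad_of_finrank_range_le_one
    (𝓛 : Matrix (Fin 2) (Fin 2) ℂ →ₗ[ℂ] Matrix (Fin 2) (Fin 2) ℂ)
    (hL : IsLindblad (fun ρ => 𝓛 ρ)) (hrk : Module.finrank ℂ (LinearMap.range 𝓛) ≤ 1) :
    𝓛 = 0 := by
  obtain ⟨H, hH, m, Ls, hLs⟩ := isLindblad_iff.1 hL
  have h𝓛 (ρ) : 𝓛 ρ = lindbladian H Ls ρ := congrFun hLs ρ
  obtain ⟨T, hT, hrange⟩ := exists_isHermitian_forall_eq_smul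
    (fun ρ => by simp only [h𝓛, lindbladian_conjTranspose hH]) hrk
  have hzero := lindbladian_eq_zero_of_forall_eq_smul hT (by simpa only [h𝓛] using hrange)
  ext1 ρ
  simp [h𝓛, hzero]

end Qubit

/-- the kernel of a single-qubit Lindblad generator never has complex
dimension exactly 3; equivalently, a single-qubit Lindblad generator annihilating three
linearly independent matrices is identically zero. -/
theorem stmt11 (𝓛 : Matrix (Fin 2) (Fin 2) ℂ →ₗ[ℂ] Matrix (Fin 2) (Fin 2) ℂ)
    (hL : IsLindblad (fun ρ => 𝓛 ρ)) :
    Module.finrank ℂ (LinearMap.ker 𝓛) ≠ 3 ∧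
    (∀ v : Fin 3 → Matrix (Fin 2) (Fin 2) ℂ, LinearIndependent ℂ v →
      (∀ i, 𝓛 (v i) = 0) → 𝓛 = 0) := by
  have h4 : Module.finrank ℂ (Matrix (Fin 2) (Fin 2) ℂ) = 4 := by simp [Module.finrank_matrix]
  have hrank := LinearMap.finrank_range_add_finrank_ker 𝓛
  have hzero (h3 : 3 ≤ Module.finrank ℂ (LinearMap.ker 𝓛)) : 𝓛 = 0 :=
    eq_zero_of_isLindblad_of_finrank_range_le_one 𝓛 hL (by omega)
  refine ⟨fun h3 => ?_, fun v hv hv0 => hzero ?_⟩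
  · rw [hzero h3.ge, LinearMap.ker_zero, finrank_top, h4] at h3
    omega
  · calc 3 = Module.finrank ℂ (Submodule.span ℂ (Set.range v)) := by
          rw [finrank_span_eq_card hv, Fintype.card_fin]
      _ ≤ Module.finrank ℂ (LinearMap.ker 𝓛) :=
          Submodule.finrank_mono (Submodule.span_le.2 (Set.range_subset_iff.2 hv0))
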